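/- arXiv:1610.01368 — 4 statements merged into one kernel-verified Lean document; each statement's English description precedes it below -/
import Mathlib

section
/- Let F be a field of characteristic 0 and α, β ∈ F×. Suppose E is a field extension of F containing elements a, b with a² = α and b² = -β. Then the map sending i ↦ [[a,0],[0,-a]] and j ↦ [[0,b],[-b,0]] extends to an E-algebra isomorphism ℍ_F^{α,β} ⊗_F E → M₂(E). -/
/-!
The matrices `I = !![a, 0; 0, -a]` and `J = !![0, b; -b, 0]` satisfy `I² = α`, `J² = β` and
`IJ = -JI`, so the universal properties of `ℍ[F, α, β]` and of base change give an `E`-algebra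
map `E ⊗[F] ℍ[F, α, β] → M₂(E)`. When `2`, `a` and `b` are invertible, `1, I, J, IJ` span `M₂(E)`,
so this map is surjective, hence bijective since both sides have dimension `4` over `E`.
-/

open Quaternion
open scoped TensorProduct

namespace Matrix

section QuaternionBasis

variable {F E : Type*} [CommRing F] [CommRing E] [Algebra F E] {α β : F} {a b : E}

def quaternionBasis (ha : a ^ 2 = algebraMap F E α) (hb : b ^ 2 = -algebraMap F E β) :
    QuaternionAlgebra.Basis (Matrix (Fin 2) (Fin 2) E) α 0 β where
  i := !![a, 0; 0, -a]
  j := !![0, b; -b, 0]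
  k := !![0, a * b; a * b, 0]
  i_mul_i := by
    ext i j
    fin_cases i <;> fin_cases j <;> simp [Algebra.smul_def, algebraMap_eq_diagonal, ← ha, sq]
  j_mul_j := by
    have hβ : algebraMap F E β = -b ^ 2 := by rw [hb, neg_neg]
    ext i j
    fin_cases i <;> fin_cases j <;> simp [Algebra.smul_def, hβ, sq]
  i_mul_j := by
    ext i j
    fin_cases i <;> fin_cases j <;> simp
  j_mul_i := by
    ext i j
    fin_cases i <;> fin_cases j <;> simp [mul_comm]

end QuaternionBasis

theorem eq_quaternion_combination {E : Type*} [Field E] {a b : E} (h2 : (2 : E) ≠ 0)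
    (ha : a ≠ 0) (hb : b ≠ 0) (M : Matrix (Fin 2) (Fin 2) E) :
    M = ((M 0 0 + M 1 1) / 2) • 1 + ((M 0 0 - M 1 1) / (2 * a)) • !![a, 0; 0, -a]
      + ((M 0 1 - M 1 0) / (2 * b)) • !![0, b; -b, 0]
      + ((M 0 1 + M 1 0) / (2 * (a * b))) • (!![a, 0; 0, -a] * !![0, b; -b, 0]) := by
  ext i j
  fin_cases i <;> fin_cases j <;> simp <;> field_simp <;> ring

section BaseChange

variable {F E : Type*} [CommRing F] [Field E] [Algebra F E] {α β : F} {a b : E}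
  (ha : a ^ 2 = algebraMap F E α) (hb : b ^ 2 = -algebraMap F E β)

noncomputable def quaternionBaseChangeHom : E ⊗[F] ℍ[F, α, β] →ₐ[E] Matrix (Fin 2) (Fin 2) E :=
  AlgHom.liftEquiv F E _ _ (quaternionBasis ha hb).liftHom

theorem quaternionBaseChangeHom_one_tmul_i :
    quaternionBaseChangeHom ha hb (1 ⊗ₜ ⟨0, 1, 0, 0⟩) = !![a, 0; 0, -a] := by
  simp [quaternionBaseChangeHom, QuaternionAlgebra.Basis.lift, quaternionBasis]

theorem quaternionBaseChangeHom_one_tmul_j :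
    quaternionBaseChangeHom ha hb (1 ⊗ₜ ⟨0, 0, 1, 0⟩) = !![0, b; -b, 0] := by
  simp [quaternionBaseChangeHom, QuaternionAlgebra.Basis.lift, quaternionBasis]

theorem quaternionBaseChangeHom_surjective (h2 : (2 : E) ≠ 0) (ha0 : a ≠ 0) (hb0 : b ≠ 0) :
    Function.Surjective (quaternionBaseChangeHom ha hb) := by
  intro M
  change M ∈ (quaternionBaseChangeHom ha hb).range
  rw [eq_quaternion_combination h2 ha0 hb0 M, ← quaternionBaseChangeHom_one_tmul_i ha hb,
    ← quaternionBaseChangeHom_one_tmul_j ha hb]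
  have hi := (quaternionBaseChangeHom ha hb).mem_range_self (1 ⊗ₜ ⟨0, 1, 0, 0⟩)
  have hj := (quaternionBaseChangeHom ha hb).mem_range_self (1 ⊗ₜ ⟨0, 0, 1, 0⟩)
  have h1 := (quaternionBaseChangeHom ha hb).range.one_mem
  have hij := (quaternionBaseChangeHom ha hb).range.mul_mem hi hj
  exact add_mem (add_mem (add_mem (Subalgebra.smul_mem _ h1 _) (Subalgebra.smul_mem _ hi _))
    (Subalgebra.smul_mem _ hj _)) (Subalgebra.smul_mem _ hij _)

theorem quaternionBaseChangeHom_bijective [Nontrivial F] (h2 : (2 : E) ≠ 0) (ha0 : a ≠ 0)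
    (hb0 : b ≠ 0) : Function.Bijective (quaternionBaseChangeHom ha hb) := by
  have hsurj := quaternionBaseChangeHom_surjective ha hb h2 ha0 hb0
  refine ⟨(LinearMap.injective_iff_surjective_of_finrank_eq_finrank ?_).2 hsurj, hsurj⟩
  rw [Module.finrank_baseChange, QuaternionAlgebra.finrank_eq_four, Module.finrank_matrix]
  simp

end BaseChange

end Matrix

/-- if `E/F` is a field extension containing `a, b` with `a² = α`,
`b² = -β`, then `i ↦ [[a,0],[0,-a]]`, `j ↦ [[0,b],[-b,0]]` extends to an
`E`-algebra isomorphism `ℍ_F^{α,β} ⊗_F E ≅ M₂(E)`. -/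
theorem stmt8 (F E : Type*) [Field F] [CharZero F] [Field E] [Algebra F E]
    (α β : F) (hα : α ≠ 0) (hβ : β ≠ 0) (a b : E)
    (ha : a ^ 2 = algebraMap F E α) (hb : b ^ 2 = -algebraMap F E β) :
    ∃ φ : (E ⊗[F] ℍ[F, α, β]) ≃ₐ[E] Matrix (Fin 2) (Fin 2) E,
      φ ((1 : E) ⊗ₜ (⟨0, 1, 0, 0⟩ : ℍ[F, α, β])) = !![a, 0; 0, -a] ∧
      φ ((1 : E) ⊗ₜ (⟨0, 0, 1, 0⟩ : ℍ[F, α, β])) = !![0, b; -b, 0] := by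
  have : CharZero E := charZero_of_injective_algebraMap (algebraMap F E).injective
  have h2 : (2 : E) ≠ 0 := two_ne_zero
  have ha0 : a ≠ 0 := ne_zero_pow two_ne_zero (ha ▸ (map_ne_zero _).2 hα)
  have hb0 : b ≠ 0 := ne_zero_pow two_ne_zero (hb ▸ neg_ne_zero.2 ((map_ne_zero _).2 hβ))
  exact ⟨.ofBijective _ (Matrix.quaternionBaseChangeHom_bijective ha hb h2 ha0 hb0),
    Matrix.quaternionBaseChangeHom_one_tmul_i ha hb,
    Matrix.quaternionBaseChangeHom_one_tmul_j ha hb⟩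
end

section
/- Let α, β < 0 be real numbers and 𝔻 = ℍ_ℝ^{α,β}. Every element d ∈ 𝔻 with τ_r(d) = d can be written as d = u² for some u ∈ 𝔻 with τ_r(u) = u. Equivalently, for any a, b, c ∈ ℝ there exist x, y, w ∈ ℝ with x² + αy² - αβw² = a, 2xy = b, 2xw = c. -/
open Quaternion Matrix

/-- The reversion `τ_r` on a quaternion algebra `ℍ_F^{α,β}`:
`q₀ + q₁ i + q₂ j + q₃ k ↦ q₀ + q₁ i - q₂ j + q₃ k`. -/
def tauRQ {F : Type*} [CommRing F] {α β : F} (q : ℍ[F, α, β]) : ℍ[F, α, β] :=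
  ⟨q.re, q.imI, -q.imJ, q.imK⟩

/-!
Squaring `u = x + y i + w k` gives `x² + α y² - αβ w² + 2xy i + 2xw k`, since the cross terms
`ik + ki` cancel. So it suffices to solve `x² + p y² + q w² = a`, `2xy = b`, `2xw = c` for
`p, q < 0`. If `b = c = 0`, take `x = √a` or `y = √(a/p)`. Otherwise put `y = b/2x`, `w = c/2x`:
then `t = x²` must satisfy `t² - a t + K/4 = 0` with `K = p b² + q c² < 0`, and a monic
quadratic with negative constant term has a positive root.
-/

lemma exists_pos_sq_add_eq_mul {a k : ℝ} (hk : k < 0) : ∃ t > 0, t ^ 2 + k = a * t := by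
  set s := √(a ^ 2 - 4 * k)
  have hs : s ^ 2 = a ^ 2 - 4 * k := Real.sq_sqrt (by nlinarith [sq_nonneg a])
  have has : |a| < s := by
    rw [← Real.sqrt_sq_eq_abs]
    exact Real.sqrt_lt_sqrt (sq_nonneg a) (by linarith)
  refine ⟨(a + s) / 2, by linarith [neg_abs_le a], by linear_combination hs / 4⟩

lemma exists_sq_add_mul_sq_add_mul_sq {p q : ℝ} (hp : p < 0) (hq : q < 0) (a b c : ℝ) :
    ∃ x y w : ℝ, x ^ 2 + p * y ^ 2 + q * w ^ 2 = a ∧ 2 * x * y = b ∧ 2 * x * w = c := by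
  by_cases hbc : b = 0 ∧ c = 0
  · obtain ⟨rfl, rfl⟩ := hbc
    rcases le_or_gt 0 a with ha | ha
    · exact ⟨√a, 0, 0, by simp [Real.sq_sqrt ha], by ring, by ring⟩
    · have hap : 0 ≤ a / p := div_nonneg_of_nonpos ha.le hp.le
      refine ⟨0, √(a / p), 0, ?_, by ring, by ring⟩
      rw [Real.sq_sqrt hap, mul_div_cancel₀ a hp.ne]
      ring
  · have hK : p * b ^ 2 + q * c ^ 2 < 0 := by
      rcases not_and_or.mp hbc with hb | hc
      · nlinarith [sq_pos_of_ne_zero hb, sq_nonneg c]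
      · nlinarith [sq_pos_of_ne_zero hc, sq_nonneg b]
    obtain ⟨t, ht, hroot⟩ :=
      exists_pos_sq_add_eq_mul (a := a) (k := (p * b ^ 2 + q * c ^ 2) / 4) (by linarith)
    have hx : (√t) ^ 2 = t := Real.sq_sqrt ht.le
    have hx0 : √t ≠ 0 := (Real.sqrt_pos.mpr ht).ne'
    refine ⟨√t, b / (2 * √t), c / (2 * √t), ?_, by field_simp, by field_simp⟩
    field_simp
    linear_combination 4 * hroot + 4 * (√t ^ 2 + t - a) * hx

lemma tauRQ_eq_self_iff {F : Type*} [CommRing F] [NoZeroDivisors F] [CharZero F] {α β : F}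
    (q : ℍ[F, α, β]) : tauRQ q = q ↔ q.imJ = 0 := by
  refine ⟨fun h => CharZero.neg_eq_self_iff.mp (congrArg QuaternionAlgebra.imJ h), fun h => ?_⟩
  ext <;> simp [tauRQ, h]

lemma sq_of_imJ_eq_zero {F : Type*} [CommRing F] {α β : F} {u : ℍ[F, α, β]} (hu : u.imJ = 0) :
    u ^ 2 = ⟨u.re ^ 2 + α * u.imI ^ 2 - α * β * u.imK ^ 2, 2 * u.re * u.imI, 0,
      2 * u.re * u.imK⟩ := by
  ext <;> simp [pow_two, hu] <;> ring

/-- for `α, β < 0`, every `d ∈ ℍ_ℝ^{α,β}` fixed by the reversion is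
a square of a reversion-fixed element; equivalently the corresponding real system
of equations is solvable. -/
theorem stmt12 (α β : ℝ) (hα : α < 0) (hβ : β < 0) :
    (∀ d : ℍ[ℝ, α, β], tauRQ d = d → ∃ u : ℍ[ℝ, α, β], tauRQ u = u ∧ d = u ^ 2) ∧
    (∀ a b c : ℝ, ∃ x y w : ℝ,
      x ^ 2 + α * y ^ 2 - α * β * w ^ 2 = a ∧ 2 * x * y = b ∧ 2 * x * w = c) := by
  have hαβ : -(α * β) < 0 := neg_neg_of_pos (mul_pos_of_neg_of_neg hα hβ)
  have hsystem : ∀ a b c : ℝ, ∃ x y w : ℝ,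
      x ^ 2 + α * y ^ 2 - α * β * w ^ 2 = a ∧ 2 * x * y = b ∧ 2 * x * w = c := by
    intro a b c
    simpa [sub_eq_add_neg, neg_mul] using exists_sq_add_mul_sq_add_mul_sq hα hαβ a b c
  refine ⟨fun d hd => ?_, hsystem⟩
  have hdJ : d.imJ = 0 := (tauRQ_eq_self_iff d).mp hd
  obtain ⟨x, y, w, hre, hI, hK⟩ := hsystem d.re d.imI d.imK
  refine ⟨⟨x, y, 0, w⟩, (tauRQ_eq_self_iff _).mpr rfl, ?_⟩
  rw [sq_of_imJ_eq_zero rfl]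
  ext <;> simp [hre, hI, hK, hdJ]
end

section
/- Let F be a field of characteristic 0, 𝔻 = ℍ_F^{α,β} with α, β < 0 (F ⊂ ℝ), A = diag(a₁,…,aₙ) ∈ Mₙ(𝔻) non-singular and τ_r-hermitian. If S = diag(s₁,…,sₙ) ∈ Mₙ(𝔻) satisfies S² = -λIₙ and ᵗτ_r(S)·A·S = μA for some λ, μ ∈ F×, with some sₖ ∉ F, then μ = λ or μ = -λ. -/
open Quaternion Matrix

set_option synthInstance.maxHeartbeats 1000000

/-!
The norm form `N` is multiplicative and invariant under `τ_r`. Applying it to the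
`k`-th diagonal entries of `ᵗτ_r(S)·A·S = μA` and `S² = -λIₙ` gives
`N(sₖ)² N(aₖ) = μ² N(aₖ)` and `N(sₖ)² = λ²`. Since `aₖ` is invertible, so is `N(aₖ)`,
hence `μ² = λ²`.
-/

namespace QuaternionAlgebra

variable {R : Type*} [CommRing R] {α β : R}

def normForm : ℍ[R, α, β] →* R where
  toFun q := q.re ^ 2 - α * q.imI ^ 2 - β * q.imJ ^ 2 + α * β * q.imK ^ 2
  map_one' := by simp
  map_mul' p q := by
    simp only [re_mul, imI_mul, imJ_mul, imK_mul]
    ring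

theorem normForm_apply (q : ℍ[R, α, β]) :
    normForm q = q.re ^ 2 - α * q.imI ^ 2 - β * q.imJ ^ 2 + α * β * q.imK ^ 2 :=
  rfl

@[simp]
theorem normForm_neg (q : ℍ[R, α, β]) : normForm (-q) = normForm q := by
  simp only [normForm_apply, re_neg, imI_neg, imJ_neg, imK_neg]
  ring

@[simp]
theorem normForm_smul (c : R) (q : ℍ[R, α, β]) : normForm (c • q) = c ^ 2 * normForm q := by
  simp only [normForm_apply, re_smul, imI_smul, imJ_smul, imK_smul, smul_eq_mul]
  ring

@[simp]
theorem normForm_tauRQ (q : ℍ[R, α, β]) : normForm (tauRQ q) = normForm q := by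
  simp only [normForm_apply, tauRQ]
  ring

end QuaternionAlgebra

open QuaternionAlgebra

theorem Matrix.isUnit_apply_of_isUnit_diagonal {n R : Type*} [Fintype n] [DecidableEq n]
    [Semiring R] {v : n → R} (h : IsUnit (diagonal v)) (i : n) : IsUnit (v i) := by
  obtain ⟨u, hu⟩ := h
  refine isUnit_iff_exists.mpr ⟨(↑u⁻¹ : Matrix n n R) i i, ?_, ?_⟩
  · simpa [hu, diagonal_mul] using congrFun (congrFun u.mul_inv i) i
  · simpa [hu, mul_diagonal] using congrFun (congrFun u.inv_mul i) i

@[simp]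
theorem tauRQ_zero {R : Type*} [CommRing R] {α β : R} : tauRQ (0 : ℍ[R, α, β]) = 0 := by
  ext <;> simp [tauRQ]

theorem eq_or_eq_neg_of_tauRQ_mul_mul_eq_smul {R : Type*} [CommRing R] [IsDomain R] {α β : R}
    {a s : ℍ[R, α, β]} {lam mu : R} (ha : IsUnit a) (hs : s * s = -(lam • 1))
    (hsas : tauRQ s * a * s = mu • a) :
    mu = lam ∨ mu = -lam := by
  have hNs : normForm s ^ 2 = lam ^ 2 := by
    simpa [sq, ← map_mul] using congrArg normForm hs
  have hNsas : normForm s ^ 2 * normForm a = mu ^ 2 * normForm a :=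
    calc normForm s ^ 2 * normForm a = normForm (tauRQ s * a * s) := by
          rw [map_mul, map_mul, normForm_tauRQ]
          ring
      _ = mu ^ 2 * normForm a := by rw [hsas, normForm_smul]
  rw [hNs] at hNsas
  exact sq_eq_sq_iff_eq_or_eq_neg.mp ((ha.map normForm).mul_right_cancel hNsas).symm

theorem stmt16_general (F : Subfield ℝ) (α β : F)
    (n : ℕ) (a s : Fin n → ℍ[F, α, β])
    (hAu : IsUnit (Matrix.diagonal a))
    (lam mu : F)
    (hS2 : (Matrix.diagonal s) ^ 2
      = -(lam • (1 : Matrix (Fin n) (Fin n) ℍ[F, α, β])))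
    (hSAS : ((Matrix.diagonal s).map tauRQ)ᵀ * Matrix.diagonal a * Matrix.diagonal s
      = mu • Matrix.diagonal a)
    (hk : ∃ k, ¬∃ c : F, s k = c • (1 : ℍ[F, α, β])) :
    mu = lam ∨ mu = -lam := by
  obtain ⟨k, -⟩ := hk
  have hak : IsUnit (a k) := isUnit_apply_of_isUnit_diagonal hAu k
  have hsk : s k * s k = -(lam • 1) := by
    simpa [sq] using congrFun (congrFun hS2 k) k
  have hsask : tauRQ (s k) * a k * s k = mu • a k := by
    rw [diagonal_map tauRQ_zero, diagonal_transpose, diagonal_mul_diagonal,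
      diagonal_mul_diagonal] at hSAS
    simpa using congrFun (congrFun hSAS k) k
  exact eq_or_eq_neg_of_tauRQ_mul_mul_eq_smul hak hsk hsask

/-- let `F ⊂ ℝ`, `α, β < 0`, `A = diag(a₁,…,aₙ)` non-singular and
`τ_r`-hermitian. If a diagonal `S = diag(s₁,…,sₙ)` satisfies `S² = -λIₙ` and
`ᵗτ_r(S)·A·S = μA` with `λ, μ ∈ F×`, and some `sₖ ∉ F`, then `μ = ±λ`. -/
theorem stmt16 (F : Subfield ℝ) (α β : F) (hα : (α : ℝ) < 0) (hβ : (β : ℝ) < 0)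
    (n : ℕ) (a s : Fin n → ℍ[F, α, β])
    (ha : ∀ l, tauRQ (a l) = a l) (hAu : IsUnit (Matrix.diagonal a))
    (lam mu : F) (hlam : lam ≠ 0) (hmu : mu ≠ 0)
    (hS2 : (Matrix.diagonal s) ^ 2
      = -(lam • (1 : Matrix (Fin n) (Fin n) ℍ[F, α, β])))
    (hSAS : ((Matrix.diagonal s).map tauRQ)ᵀ * Matrix.diagonal a * Matrix.diagonal s
      = mu • Matrix.diagonal a)
    (hk : ∃ k, ¬∃ c : F, s k = c • (1 : ℍ[F, α, β])) :
    mu = lam ∨ mu = -lam :=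
  stmt16_general F α β n a s hAu lam mu hS2 hSAS hk
end

section
/- Let ℍ be the real quaternions, and fix real numbers λ₁,…,λₙ. Set e(λ) = cos(λ) + j·sin(λ) ∈ ℝ + ℝj, S = diag(i·e(λ₁),…,i·e(λₙ)) and T = diag(e(λ₁/2),…,e(λₙ/2)) in Mₙ(ℍ). Then S = (i·Iₙ)·T², and a matrix Q ∈ Mₙ(ℍ) satisfies SQS⁻¹ = Q if and only if Q = T⁻¹·C·T for some C ∈ Mₙ(ℝ + ℝi). -/
open Quaternion Matrix

/-- `e(λ) = cos λ + j sin λ ∈ ℝ + ℝj ⊂ ℍ`. -/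
noncomputable def eQ (l : ℝ) : ℍ[ℝ] := ⟨Real.cos l, 0, Real.sin l, 0⟩

/-- The quaternion `i`. -/
def iQ : ℍ[ℝ] := ⟨0, 1, 0, 0⟩

/-- `S = diag(i·e(λ₁),…,i·e(λₙ))`. -/
noncomputable def Smat {n : ℕ} (lam : Fin n → ℝ) : Matrix (Fin n) (Fin n) ℍ[ℝ] :=
  Matrix.diagonal fun l => iQ * eQ (lam l)

/-- `S⁻¹`. -/
noncomputable def Smatinv {n : ℕ} (lam : Fin n → ℝ) : Matrix (Fin n) (Fin n) ℍ[ℝ] :=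
  Matrix.diagonal fun l => (iQ * eQ (lam l))⁻¹

/-- `T = diag(e(λ₁/2),…,e(λₙ/2))`. -/
noncomputable def Tmat {n : ℕ} (lam : Fin n → ℝ) : Matrix (Fin n) (Fin n) ℍ[ℝ] :=
  Matrix.diagonal fun l => eQ (lam l / 2)

/-- `T⁻¹`. -/
noncomputable def Tmatinv {n : ℕ} (lam : Fin n → ℝ) : Matrix (Fin n) (Fin n) ℍ[ℝ] :=
  Matrix.diagonal fun l => (eQ (lam l / 2))⁻¹

lemma eQ_mul (a b : ℝ) : eQ a * eQ b = eQ (a + b) := by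
  ext <;> simp only [Quaternion.re_mul, Quaternion.imI_mul, Quaternion.imJ_mul, Quaternion.imK_mul] <;> simp [eQ, Quaternion.ext_iff, Real.cos_add, Real.sin_add] <;> ring

lemma eQ_zero : eQ 0 = 1 := by ext <;> simp [eQ]

lemma eQ_ne_zero (a : ℝ) : eQ a ≠ 0 :=
  left_ne_zero_of_mul_eq_one (by rw [eQ_mul, add_neg_cancel, eQ_zero] : eQ a * eQ (-a) = 1)

lemma inv_eQ (a : ℝ) : (eQ a)⁻¹ = eQ (-a) :=
  inv_eq_of_mul_eq_one_right (by rw [eQ_mul, add_neg_cancel, eQ_zero])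

lemma iQ_mul_iQ : iQ * iQ = -1 := by ext <;> simp only [Quaternion.re_mul, Quaternion.imI_mul, Quaternion.imJ_mul, Quaternion.imK_mul] <;> simp [iQ]

lemma iQ_ne_zero : iQ ≠ 0 := by
  intro h
  have := congrArg QuaternionAlgebra.imI h
  simp [iQ] at this

lemma inv_iQ : iQ⁻¹ = -iQ :=
  inv_eq_of_mul_eq_one_right (by rw [mul_neg, iQ_mul_iQ, neg_neg])

lemma iQ_mul_eQ (a : ℝ) : iQ * eQ a = eQ (-a) * iQ := by
  ext <;> simp only [Quaternion.re_mul, Quaternion.imI_mul, Quaternion.imJ_mul, Quaternion.imK_mul] <;> simp [iQ, eQ]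

lemma comm_iQ_iff (z : ℍ[ℝ]) : iQ * z = z * iQ ↔ z.imJ = 0 ∧ z.imK = 0 := by
  constructor
  · intro h
    have hJ := congrArg QuaternionAlgebra.imJ h
    have hK := congrArg QuaternionAlgebra.imK h
    simp only [Quaternion.re_mul, Quaternion.imI_mul, Quaternion.imJ_mul, Quaternion.imK_mul] at hJ hK
    simp [iQ] at hJ hK
    constructor <;> linarith
  · intro ⟨hJ, hK⟩
    ext <;> simp only [Quaternion.re_mul, Quaternion.imI_mul, Quaternion.imJ_mul, Quaternion.imK_mul] <;> simp [iQ, hJ, hK]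

lemma iQ_mul_eQ' (a : ℝ) (x : ℍ[ℝ]) : iQ * (eQ a * x) = eQ (-a) * (iQ * x) := by
  rw [← mul_assoc, iQ_mul_eQ, mul_assoc]

lemma eQ_mul' (a b : ℝ) (x : ℍ[ℝ]) : eQ a * (eQ b * x) = eQ (a + b) * x := by
  rw [← mul_assoc, eQ_mul]


lemma key (a b : ℝ) (q c : ℍ[ℝ]) (hc : q = eQ (-(a/2)) * c * eQ (b/2)) :
    (iQ * c = c * iQ) ↔ (iQ * eQ a * q = q * (iQ * eQ b)) := by
  subst hc
  have ha : -a + a / 2 = -(a/2) := by ring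
  have hb : b / 2 + -b = -(b/2) := by ring
  have ha0 : a / 2 + (-a + a / 2) = 0 := by ring
  have ha2 : -a + - -(a/2) = -(a/2) := by ring
  have ha3 : a / 2 + -(a + -(a/2)) = 0 := by ring
  constructor
  · intro icomm
    have icomm' : ∀ x : ℍ[ℝ], iQ * (c * x) = c * (iQ * x) := fun x => by
      rw [← mul_assoc, icomm, mul_assoc]
    simp only [mul_assoc, iQ_mul_eQ', eQ_mul', icomm', iQ_mul_eQ, ha, hb, ha2]
  · intro h
    have e1 : eQ (a/2) * (iQ * eQ a * (eQ (-(a/2)) * c * eQ (b/2))) =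
        iQ * c * eQ (b/2) := by
      simp only [mul_assoc, iQ_mul_eQ', eQ_mul', ha0, ha3, eQ_zero, one_mul]
    have e2 : eQ (a/2) * ((eQ (-(a/2)) * c * eQ (b/2)) * (iQ * eQ b)) =
        c * iQ * eQ (b/2) := by
      simp only [mul_assoc, iQ_mul_eQ, eQ_mul', hb]
      simp only [← mul_assoc, eQ_mul]
      norm_num [eQ_zero]
    have h2 : iQ * c * eQ (b/2) = c * iQ * eQ (b/2) := by rw [← e1, h, e2]
    exact mul_right_cancel₀ (eQ_ne_zero (b/2)) h2

lemma hc_of (a b : ℝ) (q : ℍ[ℝ]) :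
    q = eQ (-(a/2)) * (eQ (a/2) * q * (eQ (b/2))⁻¹) * eQ (b/2) := by
  rw [inv_eQ]
  simp only [mul_assoc, eQ_mul']
  rw [eQ_mul]
  norm_num [eQ_zero]

lemma key2 (a b : ℝ) (q c : ℍ[ℝ]) (hc : q = eQ (-(a/2)) * c * eQ (b/2)) :
    (iQ * c = c * iQ) ↔ iQ * eQ a * q * (iQ * eQ b)⁻¹ = q := by
  rw [mul_inv_eq_iff_eq_mul₀ (mul_ne_zero iQ_ne_zero (eQ_ne_zero b))]
  exact key a b q c hc

/-- `S = (i·Iₙ)·T²`, and `Q` commutes with conjugation by `S`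
iff `Q = T⁻¹ C T` for some `C ∈ Mₙ(ℝ + ℝi)`. -/
theorem stmt17 (n : ℕ) (lam : Fin n → ℝ) :
    Smat lam = Matrix.scalar (Fin n) iQ * (Tmat lam) ^ 2 ∧
    Smat lam * Smatinv lam = 1 ∧
    Tmat lam * Tmatinv lam = 1 ∧
    (∀ Q : Matrix (Fin n) (Fin n) ℍ[ℝ],
      Smat lam * Q * Smatinv lam = Q ↔
        ∃ C : Matrix (Fin n) (Fin n) ℍ[ℝ],
          (∀ a b, (C a b).imJ = 0 ∧ (C a b).imK = 0) ∧
          Q = Tmatinv lam * C * Tmat lam) := by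
  refine ⟨?_, ?_, ?_, ?_⟩
  · rw [Smat, Tmat, show Matrix.scalar (Fin n) iQ = Matrix.diagonal (fun _ => iQ) from rfl,
      sq, Matrix.diagonal_mul_diagonal, Matrix.diagonal_mul_diagonal]
    exact congrArg Matrix.diagonal (funext fun i => by
      rw [eQ_mul, show lam i / 2 + lam i / 2 = lam i from by ring])
  · rw [Smat, Smatinv, Matrix.diagonal_mul_diagonal]
    rw [show (fun l => iQ * eQ (lam l) * (iQ * eQ (lam l))⁻¹) = fun _ => (1:ℍ[ℝ]) from
      funext fun l => mul_inv_cancel₀ (mul_ne_zero iQ_ne_zero (eQ_ne_zero _)), Matrix.diagonal_one]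
  · rw [Tmat, Tmatinv, Matrix.diagonal_mul_diagonal]
    rw [show (fun l => eQ (lam l / 2) * (eQ (lam l / 2))⁻¹) = fun _ => (1:ℍ[ℝ]) from
      funext fun l => mul_inv_cancel₀ (eQ_ne_zero _), Matrix.diagonal_one]
  · intro Q
    have entryS : ∀ a b, (Smat lam * Q * Smatinv lam) a b
        = iQ * eQ (lam a) * Q a b * (iQ * eQ (lam b))⁻¹ := by
      intro a b
      rw [Smat, Smatinv, Matrix.mul_diagonal, Matrix.diagonal_mul]
    have entryT : ∀ (C : Matrix (Fin n) (Fin n) ℍ[ℝ]) a b,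
        (Tmatinv lam * C * Tmat lam) a b
        = eQ (-(lam a / 2)) * C a b * eQ (lam b / 2) := by
      intro C a b
      rw [Tmat, Tmatinv, Matrix.mul_diagonal, Matrix.diagonal_mul, inv_eQ]
    constructor
    · intro h
      refine ⟨Matrix.of fun a b => eQ (lam a / 2) * Q a b * (eQ (lam b / 2))⁻¹, ?_, ?_⟩
      · intro a b
        have hent : iQ * eQ (lam a) * Q a b * (iQ * eQ (lam b))⁻¹ = Q a b := by
          rw [← entryS a b, h]
        have hcomm := (key2 (lam a) (lam b) (Q a b) _ (hc_of (lam a) (lam b) (Q a b))).mpr hent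
        exact (comm_iQ_iff _).mp hcomm
      · refine Matrix.ext fun a b => ?_
        rw [entryT]
        exact hc_of (lam a) (lam b) (Q a b)
    · rintro ⟨C, hC, rfl⟩
      refine Matrix.ext fun a b => ?_
      rw [entryS]
      have hc : (Tmatinv lam * C * Tmat lam) a b
          = eQ (-(lam a / 2)) * C a b * eQ (lam b / 2) := entryT C a b
      exact (key2 (lam a) (lam b) _ (C a b) hc).mp ((comm_iQ_iff _).mpr (hC a b))
end
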